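/- Let g ≥ 4 and let M_g(α) be the determinant of the (2g−3)×(2g−3) submatrix of Z (as in the binary curve construction) on columns (1,2),…,(1,g),(2,3),…,(2,g), viewed as a polynomial in the variables α_{1,i}, α_{2,i}. Then the coefficient of the monomial α_{1,g}^{g−2} α_{2,g}^{g−3} in M_g equals (α_{2,2} − α_{2,1}) · M_{g−1}, where M_{g−1} is the analogous determinant in the variables α_{k,i} with i ≤ g−1. -/

import Mathlib

open MvPolynomial

/-- Complete homogeneous symmetric polynomial of degree `h` in two variables. -/
def qpoly {R : Type*} [CommRing R] (h : ℕ) (x y : R) : R :=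
  ∑ m ∈ Finset.range (h + 1), x ^ m * y ^ (h - m)

/-- The variable `α_{k,i}` (with `k ∈ {1,2}` encoded as `Fin 2` and `i ∈ {1,…,g}`
encoded as `0,…,g−1`), as an indeterminate over `ℂ`. -/
noncomputable def av (k : Fin 2) (i : ℕ) : MvPolynomial (Fin 2 × ℕ) ℂ :=
  MvPolynomial.X (k, i)

/-- The `(2g−3)×(2g−3)` submatrix of `Z` on the columns
`(1,2),…,(1,g),(2,3),…,(2,g)`: rows are `(q_h(α_{1,i},α_{1,j}))` for `h = 0,…,g−2`
followed by `(q_h(α_{2,i},α_{2,j}))` for `h = 1,…,g−2`. -/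
noncomputable def Nmat (g : ℕ) :
    Matrix (Fin (g - 1) ⊕ Fin (g - 2)) (Fin (g - 1) ⊕ Fin (g - 2))
      (MvPolynomial (Fin 2 × ℕ) ℂ) :=
  Matrix.of fun r c =>
    match r, c with
    | Sum.inl h, Sum.inl i => qpoly h.1 (av 0 0) (av 0 (i.1 + 1))
    | Sum.inl h, Sum.inr j => qpoly h.1 (av 0 1) (av 0 (j.1 + 2))
    | Sum.inr h, Sum.inl i => qpoly (h.1 + 1) (av 1 0) (av 1 (i.1 + 1))
    | Sum.inr h, Sum.inr j => qpoly (h.1 + 1) (av 1 1) (av 1 (j.1 + 2))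

/-- `M_g`, the determinant of the above submatrix, as a polynomial in the `α_{k,i}`. -/
noncomputable def Mdet (g : ℕ) : MvPolynomial (Fin 2 × ℕ) ℂ := (Nmat g).det

/-!
The variables `α_{1,g}` and `α_{2,g}` occur only in the last column of each block of `Nmat g`,
through `q_h(α_{k,i}, α_{k,g}) = ∑_a α_{k,g}^a α_{k,i}^{h-a}`. Expanding the determinant
bilinearly in these two columns, `α_{1,g}^{g-2} α_{2,g}^{g-3}` can only arise by taking
`α_{1,g}^{g-2}` from one column and `α_{2,g}^{g-3}` from the other. The coefficient vector of
`α_{1,g}^{g-2}` is the unit vector `e` at the last row of the first block, that of `α_{2,g}^{g-3}`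
is `e' + α_{2,i} e''` with `e''` the unit vector at the last row of the second block. By
antisymmetry the two contributions add up to `α_{2,2} - α_{2,1}` times the determinant of
`Nmat g` with those two columns replaced by `e` and `e''`, which is the principal minor `M_{g-1}`.
-/

namespace MvPolynomial

variable {σ R : Type*} [CommSemiring R]

theorem coeff_eq_zero_of_mem_supported_compl {T : Set σ} {p : MvPolynomial σ R}
    (hp : p ∈ supported R Tᶜ) {e : σ →₀ ℕ} {i : σ} (hi : i ∈ T) (he : e i ≠ 0) :
    coeff e p = 0 := by
  by_contra h
  have : i ∈ p.vars :=
    (mem_vars_iff_mem_support i).2 ⟨e, mem_support_iff.2 h, Finsupp.mem_support_iff.2 he⟩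
  exact mem_supported.1 hp this hi

theorem coeff_add_single_X_pow_mul {t : σ} {p : MvPolynomial σ R} (hp : p ∈ supported R {t}ᶜ)
    {d : σ →₀ ℕ} (hd : d t = 0) (a A : ℕ) :
    coeff (d + Finsupp.single t A) (X t ^ a * p) = if a = A then coeff d p else 0 := by
  classical
  rw [X_pow_eq_monomial, coeff_monomial_mul', one_mul]
  have hle : Finsupp.single t a ≤ d + Finsupp.single t A ↔ a ≤ A := by
    refine ⟨fun h => by simpa [hd] using h t, fun h i => ?_⟩
    rcases eq_or_ne i t with rfl | hi
    · simpa [hd] using h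
    · simp [Ne.symm hi]
  by_cases haA : a = A
  · subst haA
    rw [if_pos (hle.2 le_rfl), if_pos rfl, add_tsub_cancel_right]
  rw [if_neg haA]
  split_ifs with h
  · refine coeff_eq_zero_of_mem_supported_compl hp (Set.mem_singleton t) ?_
    have := hle.1 h
    simp [hd]
    omega
  · rfl

theorem coeff_add_single_add_single_X_pow_mul_X_pow_mul {t s : σ} (hts : t ≠ s)
    {p : MvPolynomial σ R} (hp : p ∈ supported R ({t, s} : Set σ)ᶜ)
    {d : σ →₀ ℕ} (hdt : d t = 0) (hds : d s = 0) (a b A C : ℕ) :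
    coeff (d + Finsupp.single t A + Finsupp.single s C) (X t ^ a * (X s ^ b * p)) =
      if a = A ∧ b = C then coeff d p else 0 := by
  have hs : p ∈ supported R {s}ᶜ := supported_mono (by simp) hp
  have hXs : X s ∈ supported R {t}ᶜ := Algebra.subset_adjoin ⟨s, Ne.symm hts, rfl⟩
  have ht : X s ^ b * p ∈ supported R {t}ᶜ :=
    mul_mem (pow_mem hXs b) (supported_mono (by simp) hp)
  rw [add_right_comm, coeff_add_single_X_pow_mul ht (by simp [hdt, hts]),
    coeff_add_single_X_pow_mul hs hds, ite_and]

theorem coeff_bilin_sum_pow_smul {V : Type*} [AddCommMonoid V] [Module (MvPolynomial σ R) V]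
    (B : V →ₗ[MvPolynomial σ R] V →ₗ[MvPolynomial σ R] MvPolynomial σ R)
    {t s : σ} (hts : t ≠ s) (V₀ : Set V)
    (hB : ∀ u ∈ V₀, ∀ v ∈ V₀, B u v ∈ supported R ({t, s} : Set σ)ᶜ)
    {U W U' W' : ℕ → V} (hU : ∀ a, U a ∈ V₀) (hW : ∀ a, W a ∈ V₀)
    (hU' : ∀ a, U' a ∈ V₀) (hW' : ∀ a, W' a ∈ V₀)
    {N A C : ℕ} (hA : A < N) (hC : C < N) (hA0 : A ≠ 0) (hC0 : C ≠ 0)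
    {d : σ →₀ ℕ} (hdt : d t = 0) (hds : d s = 0) :
    coeff (d + Finsupp.single t A + Finsupp.single s C)
        (B (∑ a ∈ Finset.range N, (X (R := R) t ^ a • U a + X (R := R) s ^ a • W a))
          (∑ b ∈ Finset.range N, (X (R := R) t ^ b • U' b + X (R := R) s ^ b • W' b))) =
      coeff d (B (U A) (W' C) + B (W C) (U' A)) := by
  set E := d + Finsupp.single t A + Finsupp.single s C
  have key (a b : ℕ) {p : MvPolynomial σ R} (hp : p ∈ supported R ({t, s} : Set σ)ᶜ) :
      coeff E (X t ^ a * (X t ^ b * p)) = 0 ∧ coeff E (X s ^ a * (X s ^ b * p)) = 0 ∧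
      coeff E (X t ^ a * (X s ^ b * p)) = (if a = A ∧ b = C then coeff d p else 0) ∧
      coeff E (X s ^ a * (X t ^ b * p)) = (if b = A ∧ a = C then coeff d p else 0) := by
    have h := coeff_add_single_add_single_X_pow_mul_X_pow_mul hts hp hdt hds
    refine ⟨?_, ?_, h a b A C, by rw [mul_left_comm, h]⟩
    · rw [← mul_assoc, ← pow_add, ← one_mul p, ← pow_zero (X s), h, if_neg (by omega)]
    · rw [← one_mul (X s ^ a * _), ← pow_zero (X t), ← mul_assoc (X s ^ a), ← pow_add, h,
        if_neg (by omega)]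
  simp only [map_sum, map_add, map_smul, LinearMap.sum_apply, LinearMap.add_apply,
    LinearMap.smul_apply, smul_eq_mul, Finset.mul_sum, mul_add, coeff_sum, coeff_add]
  simp only [key _ _ (hB _ (hU _) _ (hU' _)), key _ _ (hB _ (hU _) _ (hW' _)),
    key _ _ (hB _ (hW _) _ (hU' _)), key _ _ (hB _ (hW _) _ (hW' _))]
  simp only [zero_add, add_zero, Finset.sum_add_distrib, ite_and, Finset.sum_ite_eq',
    Finset.sum_ite_irrel, Finset.sum_const_zero, Finset.mem_range, hA, hC, if_true]
  exact add_comm _ _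

end MvPolynomial

namespace Matrix

variable {n R : Type*} [Fintype n] [DecidableEq n] [CommRing R]

noncomputable def detUpdateCol₂ (M : Matrix n n R) {j j' : n} (h : j ≠ j') :
    (n → R) →ₗ[R] (n → R) →ₗ[R] R :=
  LinearMap.mk₂ R (fun u v => ((M.updateCol j u).updateCol j' v).det)
    (fun u u' v => by simp only [updateCol_comm _ h, det_updateCol_add])
    (fun c u v => by simp only [updateCol_comm _ h, det_updateCol_smul, smul_eq_mul])
    (fun u v v' => det_updateCol_add _ _ _ _)
    (fun c u v => det_updateCol_smul _ _ _ _)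

@[simp]
theorem detUpdateCol₂_apply (M : Matrix n n R) {j j' : n} (h : j ≠ j') (u v : n → R) :
    M.detUpdateCol₂ h u v = ((M.updateCol j u).updateCol j' v).det :=
  rfl

theorem detUpdateCol₂_isAlt (M : Matrix n n R) {j j' : n} (h : j ≠ j') :
    (M.detUpdateCol₂ h).IsAlt := fun u =>
  det_zero_of_column_eq h fun k => by simp [h]

theorem detUpdateCol₂_col_col (M : Matrix n n R) {j j' : n} (h : j ≠ j') :
    M.detUpdateCol₂ h (fun r => M r j) (fun r => M r j') = M.det := by
  rw [detUpdateCol₂_apply, updateCol_eq_self, updateCol_eq_self]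

theorem det_mem_of_forall_mem {A : Type*} [CommRing A] [Algebra R A]
    {S : Subalgebra R A} {M : Matrix n n A}
    (hM : ∀ i j, M i j ∈ S) : M.det ∈ S := by
  let M' : Matrix n n S := fun i j => ⟨M i j, hM i j⟩
  have : S.val M'.det = M.det := by rw [AlgHom.map_det]; rfl
  exact this ▸ Subtype.prop _

theorem det_eq_det_submatrix_of_col_eq_single {κ ι : Type*} [Fintype κ] [DecidableEq κ]
    [Fintype ι] [DecidableEq ι] (M : Matrix n n R) (e : κ ⊕ ι ≃ n)
    (hM : ∀ i, (fun r => M r (e (.inr i))) = Pi.single (e (.inr i)) 1) :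
    M.det = (M.submatrix (e ∘ .inl) (e ∘ .inl)).det := by
  have hcol (r : κ ⊕ ι) (i : ι) : M (e r) (e (.inr i)) = if r = .inr i then 1 else 0 := by
    simp [congrFun (hM i), Pi.single_apply, e.injective.eq_iff]
  rw [← det_submatrix_equiv_self e, ← fromBlocks_toBlocks (M.submatrix e e)]
  have h₁₂ : (M.submatrix e e).toBlocks₁₂ = 0 := by ext k i; simp [toBlocks₁₂, hcol]
  have h₂₂ : (M.submatrix e e).toBlocks₂₂ = 1 := by
    ext i i'; simp [toBlocks₂₂, hcol, one_apply]
  rw [h₁₂, h₂₂, det_fromBlocks_zero₁₂, det_one, mul_one]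
  rfl

end Matrix

section qcoeff

variable {R : Type*} [CommRing R]

def qcoeff (a h : ℕ) (x : R) : R := if a ≤ h then x ^ (h - a) else 0

theorem qpoly_eq_sum_pow_mul_qcoeff {h N : ℕ} (hN : h < N) (x t : R) :
    qpoly h x t = ∑ a ∈ Finset.range N, t ^ a * qcoeff a h x := by
  rw [← Finset.sum_subset (Finset.range_subset_range.2 hN), qpoly,
    ← Finset.sum_range_reflect]
  · refine Finset.sum_congr rfl fun a ha => ?_
    rw [Finset.mem_range] at ha
    rw [qcoeff, if_pos (by omega), Nat.add_sub_cancel, Nat.sub_sub_self (by omega), mul_comm]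
  · intro a _ ha
    rw [Finset.mem_range] at ha
    rw [qcoeff, if_neg (by omega), mul_zero]

def qcoeffFst (p q a : ℕ) (x : R) : Fin p ⊕ Fin q → R := Sum.elim (fun h => qcoeff a h x) 0

def qcoeffSnd (p q a : ℕ) (x : R) : Fin p ⊕ Fin q → R :=
  Sum.elim 0 (fun h => qcoeff a (h + 1) x)

theorem sum_elim_qpoly_eq_sum {p q N : ℕ} (hp : p ≤ N) (hq : q < N) (x₀ t₀ x₁ t₁ : R) :
    Sum.elim (fun h : Fin p => qpoly h x₀ t₀) (fun h : Fin q => qpoly (h + 1) x₁ t₁) =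
      ∑ a ∈ Finset.range N,
        (t₀ ^ a • qcoeffFst p q a x₀ + t₁ ^ a • qcoeffSnd p q a x₁) := by
  funext r
  rcases r with h | h
  · simp [qcoeffFst, qcoeffSnd, qpoly_eq_sum_pow_mul_qcoeff (by omega : h.1 < N)]
  · simp [qcoeffFst, qcoeffSnd, qpoly_eq_sum_pow_mul_qcoeff (by omega : h.1 + 1 < N)]

theorem qcoeffFst_last (p q : ℕ) (x : R) :
    qcoeffFst (p + 1) q p x = Pi.single (.inl (Fin.last p)) 1 := by
  funext r
  rcases r with h | h
  · rcases Fin.eq_castSucc_or_eq_last h with ⟨h, rfl⟩ | rfl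
    · simp [qcoeffFst, qcoeff, Fin.castSucc_ne_last, Nat.not_le.2 h.2]
    · simp [qcoeffFst, qcoeff]
  · simp [qcoeffFst]

theorem qcoeffSnd_last (p q : ℕ) (x : R) :
    qcoeffSnd p (q + 2) (q + 1) x =
      Pi.single (.inr (Fin.last q).castSucc) 1 + x • Pi.single (.inr (Fin.last (q + 1))) 1 := by
  funext r
  rcases r with h | h
  · simp [qcoeffSnd]
  · rcases Fin.eq_castSucc_or_eq_last h with ⟨h, rfl⟩ | rfl
    · rcases Fin.eq_castSucc_or_eq_last h with ⟨h, rfl⟩ | rfl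
      · simp [qcoeffSnd, qcoeff, Fin.ext_iff, Pi.single_apply, Nat.not_le.2 h.2, h.2.ne]
        omega
      · simp [qcoeffSnd, qcoeff]
    · simp [qcoeffSnd, qcoeff, Fin.ext_iff]

section membership

variable {K : Type*} [CommSemiring K] [Algebra K R] {S : Subalgebra K R}

theorem qpoly_mem {x y : R} (hx : x ∈ S) (hy : y ∈ S) (h : ℕ) : qpoly h x y ∈ S :=
  Subalgebra.sum_mem _ fun _ _ => mul_mem (pow_mem hx _) (pow_mem hy _)

theorem qcoeff_mem {x : R} (hx : x ∈ S) (a h : ℕ) : qcoeff a h x ∈ S := by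
  unfold qcoeff
  split_ifs
  exacts [pow_mem hx _, zero_mem _]

theorem qcoeffFst_mem {x : R} (hx : x ∈ S) (p q a : ℕ) (r : Fin p ⊕ Fin q) :
    qcoeffFst p q a x r ∈ S := by
  rcases r with h | h
  exacts [qcoeff_mem hx _ _, zero_mem _]

theorem qcoeffSnd_mem {x : R} (hx : x ∈ S) (p q a : ℕ) (r : Fin p ⊕ Fin q) :
    qcoeffSnd p q a x r ∈ S := by
  rcases r with h | h
  exacts [zero_mem _, qcoeff_mem hx _ _]

end membership

end qcoeff

def finSumFinSuccEquiv (p q : ℕ) : (Fin p ⊕ Fin q) ⊕ Fin 2 ≃ Fin (p + 1) ⊕ Fin (q + 1) :=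
  (Equiv.sumCongr (Equiv.refl _) (finSumFinEquiv (m := 1) (n := 1)).symm).trans <|
    (Equiv.sumSumSumComm _ _ _ _).trans
      (Equiv.sumCongr (finSumFinEquiv (n := 1)) (finSumFinEquiv (n := 1)))

@[simp] theorem finSumFinSuccEquiv_inl_inl (p q : ℕ) (i : Fin p) :
    finSumFinSuccEquiv p q (.inl (.inl i)) = .inl i.castSucc := rfl

@[simp] theorem finSumFinSuccEquiv_inl_inr (p q : ℕ) (j : Fin q) :
    finSumFinSuccEquiv p q (.inl (.inr j)) = .inr j.castSucc := rfl

@[simp] theorem finSumFinSuccEquiv_inr_zero (p q : ℕ) :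
    finSumFinSuccEquiv p q (.inr 0) = .inl (Fin.last p) := rfl

@[simp] theorem finSumFinSuccEquiv_inr_one (p q : ℕ) :
    finSumFinSuccEquiv p q (.inr 1) = .inr (Fin.last q) := rfl

open Matrix

section lastCols

variable (m : ℕ)

local notation "P" => MvPolynomial (Fin 2 × ℕ) ℂ

local notation "S" => MvPolynomial.supported ℂ ({(0, m + 3), (1, m + 3)} : Set (Fin 2 × ℕ))ᶜ

/-- With `g = m + 4`, the columns `inl (Fin.last _)` and `inr (Fin.last _)` of `Nmat g` are the
columns `(1,g)` and `(2,g)`, the only ones involving `α_{1,g} = av 0 (m + 3)` and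
`α_{2,g} = av 1 (m + 3)`. -/
noncomputable abbrev detNmatLastCols :
    (Fin (m + 3) ⊕ Fin (m + 2) → P) →ₗ[P] (Fin (m + 3) ⊕ Fin (m + 2) → P) →ₗ[P] P :=
  (Nmat (m + 4)).detUpdateCol₂ (j := .inl (Fin.last (m + 2))) (j' := .inr (Fin.last (m + 1)))
    Sum.inl_ne_inr

theorem Mdet_eq_detNmatLastCols :
    Mdet (m + 4) = detNmatLastCols m
      (∑ a ∈ Finset.range (m + 3), (av 0 (m + 3) ^ a • qcoeffFst _ _ a (av 0 0) +
        av 1 (m + 3) ^ a • qcoeffSnd _ _ a (av 1 0)))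
      (∑ a ∈ Finset.range (m + 3), (av 0 (m + 3) ^ a • qcoeffFst _ _ a (av 0 1) +
        av 1 (m + 3) ^ a • qcoeffSnd _ _ a (av 1 1))) := by
  rw [Mdet, ← detUpdateCol₂_col_col _ Sum.inl_ne_inr,
    ← sum_elim_qpoly_eq_sum le_rfl (by omega), ← sum_elim_qpoly_eq_sum le_rfl (by omega)]
  congr 2 <;> funext r <;> rcases r with h | h <;> rfl

theorem detNmatLastCols_single_single :
    detNmatLastCols m (Pi.single (.inl (Fin.last (m + 2))) 1)
      (Pi.single (.inr (Fin.last (m + 1))) 1) = Mdet (m + 3) := by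
  rw [detUpdateCol₂_apply, det_eq_det_submatrix_of_col_eq_single _ (finSumFinSuccEquiv _ _)]
  · refine congrArg det (Matrix.ext fun r c => ?_)
    rcases r with r | r <;> rcases c with c | c <;>
      simp [Fin.castSucc_ne_last] <;> rfl
  · intro i
    fin_cases i <;> funext r <;> simp

theorem av_mem (k : Fin 2) {i : ℕ} (hi : i ≠ m + 3) : av k i ∈ S :=
  Algebra.subset_adjoin (Set.mem_image_of_mem _ (by simp [hi]))

theorem Nmat_mem {r c : Fin (m + 3) ⊕ Fin (m + 2)} (hc₁ : c ≠ .inl (Fin.last (m + 2)))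
    (hc₂ : c ≠ .inr (Fin.last (m + 1))) : Nmat (m + 4) r c ∈ S := by
  rcases r with h | h <;> rcases c with i | j <;>
    simp only [ne_eq, Sum.inl.injEq, Sum.inr.injEq, Fin.ext_iff, Fin.val_last] at hc₁ hc₂ <;>
    exact qpoly_mem (av_mem m _ (by omega)) (av_mem m _ (by omega)) _

theorem detNmatLastCols_mem {u v : Fin (m + 3) ⊕ Fin (m + 2) → P}
    (hu : ∀ r, u r ∈ S) (hv : ∀ r, v r ∈ S) : detNmatLastCols m u v ∈ S := by
  refine det_mem_of_forall_mem fun r c => ?_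
  rw [updateCol_apply, updateCol_apply]
  split_ifs with h₂ h₁
  exacts [hv r, hu r, Nmat_mem m h₁ h₂]

theorem detNmatLastCols_qcoeff_last :
    detNmatLastCols m (qcoeffFst _ _ (m + 2) (av 0 0)) (qcoeffSnd _ _ (m + 1) (av 1 1)) +
      detNmatLastCols m (qcoeffSnd _ _ (m + 1) (av 1 0)) (qcoeffFst _ _ (m + 2) (av 0 1)) =
        (av 1 1 - av 1 0) * Mdet (m + 3) := by
  have hB : (detNmatLastCols m).IsAlt := detUpdateCol₂_isAlt _ _
  rw [← hB.neg (qcoeffFst _ _ (m + 2) (av 0 1)), qcoeffFst_last, qcoeffFst_last,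
    qcoeffSnd_last, qcoeffSnd_last, ← sub_eq_add_neg, ← map_sub, add_sub_add_left_eq_sub,
    ← sub_smul, map_smul, smul_eq_mul, detNmatLastCols_single_single]

end lastCols

/-- for `g ≥ 4`, the coefficient of the monomial
`α_{1,g}^{g−2} α_{2,g}^{g−3}` in `M_g` (a polynomial in the remaining variables)
equals `(α_{2,2} − α_{2,1}) · M_{g−1}`; expressed coefficientwise: for every exponent
vector `d` not involving `α_{1,g}` and `α_{2,g}`, the coefficient of
`d + (g−2)·e_{(1,g)} + (g−3)·e_{(2,g)}` in `M_g` is the coefficient of `d` in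
`(α_{2,2} − α_{2,1}) · M_{g−1}`. -/
theorem coeff_Mdet (g : ℕ) (hg : 4 ≤ g) :
    ∀ d : (Fin 2 × ℕ) →₀ ℕ, d ((0 : Fin 2), g - 1) = 0 → d ((1 : Fin 2), g - 1) = 0 →
      MvPolynomial.coeff
          (d + Finsupp.single ((0 : Fin 2), g - 1) (g - 2) +
            Finsupp.single ((1 : Fin 2), g - 1) (g - 3)) (Mdet g) =
        MvPolynomial.coeff d ((av 1 1 - av 1 0) * Mdet (g - 1)) := by
  obtain ⟨m, rfl⟩ : ∃ m, g = m + 4 := ⟨g - 4, by omega⟩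
  rw [show m + 4 - 1 = m + 3 by omega, show m + 4 - 2 = m + 2 by omega,
    show m + 4 - 3 = m + 1 by omega]
  intro d hd₀ hd₁
  rw [Mdet_eq_detNmatLastCols, ← detNmatLastCols_qcoeff_last]
  refine MvPolynomial.coeff_bilin_sum_pow_smul (detNmatLastCols m) (by simp)
    {u | ∀ r, u r ∈ MvPolynomial.supported ℂ _} (fun u hu v hv => detNmatLastCols_mem m hu hv)
    ?_ ?_ ?_ ?_ (by omega) (by omega) (by omega) (by omega) hd₀ hd₁
  exacts [fun a => qcoeffFst_mem (av_mem m 0 (by omega)) _ _ a,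
    fun a => qcoeffSnd_mem (av_mem m 1 (by omega)) _ _ a,
    fun a => qcoeffFst_mem (av_mem m 0 (by omega)) _ _ a,
    fun a => qcoeffSnd_mem (av_mem m 1 (by omega)) _ _ a]
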